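/- Let P₀, Q₀ be probability measures on ℝ^d, let U, V be probability measures on ℝ^d whose characteristic functions are strictly positive real numbers at every ω ∈ ℝ^d, and let Λ be a probability measure on ℝ^d such that φ_{P₀}(ω) ≠ 0 and φ_{Q₀}(ω) ≠ 0 for Λ-almost every ω. Then PhD(P₀⋆U, Q₀⋆V) = PhD(P₀, Q₀), where PhD(P,Q) = ∫ |φ_P(ω)/|φ_P(ω)| − φ_Q(ω)/|φ_Q(ω)||² dΛ(ω). -/

import Mathlib

open MeasureTheory RealInnerProductSpace

/-- The characteristic function of a measure `P` on `ℝ^d`. -/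
noncomputable def charFunc {d : ℕ} (P : Measure (EuclideanSpace ℝ (Fin d)))
    (ω : EuclideanSpace ℝ (Fin d)) : ℂ :=
  ∫ x, Complex.exp (Complex.I * (⟪ω, x⟫ : ℝ)) ∂P

/-- The phase function of a measure `P` on `ℝ^d`. -/
noncomputable def phase {d : ℕ} (P : Measure (EuclideanSpace ℝ (Fin d)))
    (ω : EuclideanSpace ℝ (Fin d)) : ℂ :=
  charFunc P ω / (‖charFunc P ω‖ : ℂ)

/-- The phase discrepancy `PhD(P,Q) = ∫ |ρ_P(ω) − ρ_Q(ω)|² dΛ(ω)`. -/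
noncomputable def PhD {d : ℕ} (P Q Λ : Measure (EuclideanSpace ℝ (Fin d))) : ℝ :=
  ∫ ω, (‖phase P ω - phase Q ω‖) ^ 2 ∂Λ

lemma charFun_conv' {d : ℕ} (P Q : Measure (EuclideanSpace ℝ (Fin d)))
    [IsProbabilityMeasure P] [IsProbabilityMeasure Q] (ω : EuclideanSpace ℝ (Fin d)) :
    charFunc (P.conv Q) ω = charFunc P ω * charFunc Q ω := by
  have hcont : Continuous fun x : EuclideanSpace ℝ (Fin d) =>
      Complex.exp (Complex.I * (⟪ω, x⟫ : ℝ)) := by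
    apply Complex.continuous_exp.comp
    exact continuous_const.mul (Complex.continuous_ofReal.comp (continuous_const.inner continuous_id))
  unfold charFunc Measure.conv
  rw [integral_map (by fun_prop) hcont.aestronglyMeasurable]
  have : ∀ p : EuclideanSpace ℝ (Fin d) × EuclideanSpace ℝ (Fin d),
      Complex.exp (Complex.I * ((⟪ω, p.1 + p.2⟫ : ℝ) : ℂ)) =
      Complex.exp (Complex.I * (⟪ω, p.1⟫ : ℝ)) * Complex.exp (Complex.I * (⟪ω, p.2⟫ : ℝ)) := by
    intro p
    rw [inner_add_right, Complex.ofReal_add, mul_add, Complex.exp_add]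
  simp_rw [this]
  exact integral_prod_mul (f := fun x => Complex.exp (Complex.I * ((⟪ω, x⟫ : ℝ) : ℂ)))
    (g := fun y => Complex.exp (Complex.I * ((⟪ω, y⟫ : ℝ) : ℂ)))

lemma phase_conv' {d : ℕ} (P Q : Measure (EuclideanSpace ℝ (Fin d)))
    [IsProbabilityMeasure P] [IsProbabilityMeasure Q] {ω : EuclideanSpace ℝ (Fin d)}
    (h : ∃ r : ℝ, 0 < r ∧ charFunc Q ω = (r : ℂ)) :
    phase (P.conv Q) ω = phase P ω := by
  obtain ⟨r, hr, hQr⟩ := h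
  unfold phase
  rw [charFun_conv', hQr]
  rw [norm_mul, Complex.norm_of_nonneg hr.le]
  push_cast
  exact mul_div_mul_right _ _ (by exact_mod_cast hr.ne')

/-- The phase discrepancy is invariant to additive SPD noise components: if `U`, `V` are SPD
components and `φ_{P₀}`, `φ_{Q₀}` are `Λ`-a.e. nonvanishing, then
`PhD(P₀⋆U, Q₀⋆V) = PhD(P₀, Q₀)`. -/
theorem stmt_2 {d : ℕ} (P₀ Q₀ U V Λ : Measure (EuclideanSpace ℝ (Fin d)))
    [IsProbabilityMeasure P₀] [IsProbabilityMeasure Q₀]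
    [IsProbabilityMeasure U] [IsProbabilityMeasure V] [IsProbabilityMeasure Λ]
    (hU : ∀ ω : EuclideanSpace ℝ (Fin d), ∃ r : ℝ, 0 < r ∧ charFunc U ω = (r : ℂ))
    (hV : ∀ ω : EuclideanSpace ℝ (Fin d), ∃ r : ℝ, 0 < r ∧ charFunc V ω = (r : ℂ))
    (hP : ∀ᵐ ω ∂Λ, charFunc P₀ ω ≠ 0)
    (hQ : ∀ᵐ ω ∂Λ, charFunc Q₀ ω ≠ 0) :
    PhD (P₀.conv U) (Q₀.conv V) Λ = PhD P₀ Q₀ Λ := by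
  unfold PhD
  apply integral_congr_ae
  filter_upwards [hP, hQ] with ω hPω hQω
  rw [phase_conv' P₀ U (hU ω), phase_conv' Q₀ V (hV ω)]
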